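/- For all θ₁, θ₂, b₁, b₃ ∈ ℝ and every b₂ > 0: P(θ₁, θ₂, b₁, b₂, b₃) ≤ P(θ₁, θ₂, −θ₂, b₂, b₃). Moreover, as a function of b₁ with the other arguments fixed, P(θ₁, θ₂, b₁, b₂, b₃) is strictly increasing for b₁ < −θ₂ and strictly decreasing for b₁ > −θ₂, so b₁ = −θ₂ is its unique maximizer. -/

import Mathlib

open MeasureTheory

/-- The tilted Gaussian integral
`P(θ₁,θ₂,b₁,b₂,b₃) = (1/(2π)) ∬_{t₁ + b₃ ≥ b₂·|t₂ + b₁|} exp(θ₁t₁ + θ₂t₂ − (t₁²+t₂²)/2)`. -/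
noncomputable def Ptilt (θ₁ θ₂ b₁ b₂ b₃ : ℝ) : ℝ :=
  (1 / (2 * Real.pi)) *
    ∫ p : ℝ × ℝ in {p : ℝ × ℝ | b₂ * |p.2 + b₁| ≤ p.1 + b₃},
      Real.exp (θ₁ * p.1 + θ₂ * p.2 - (p.1 ^ 2 + p.2 ^ 2) / 2)

/-!
Integrating out `t₁` and completing the square in `t₂` gives
`P = (2π)⁻¹ e^{θ₂²/2} ∫ φ(u - (b₁ + θ₂)) k(u) du` with `φ(x) = e^{-x²/2}` and
`k(u) = ∫_{t ≥ b₂|u| - b₃} e^{θ₁t - t²/2} dt`; both are strictly decreasing in `|u|`, and `φ` is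
even. Such an integral is strictly decreasing in `|m|`, where `m = b₁ + θ₂`: write the two shifts
as `c ∓ d`, so that `|c - d| < |c + d|` means `c d > 0`, and fold the integral about `u = c`.
Twice the difference becomes `∫ (φ(s - d) - φ(s + d)) (k(c - s) - k(c + s)) ds`, whose two factors
have the signs of `s d` and `s c`, so the integrand is positive for `s ≠ 0`.
-/

open Set
open scoped ENNReal

section SymmetricDecreasing

variable {φ k : ℝ → ℝ}

lemma apply_add_lt_apply_sub_of_mul_pos (hφ : ∀ x y, |x| < |y| → φ y < φ x) {s d : ℝ}
    (h : 0 < s * d) : φ (s + d) < φ (s - d) :=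
  hφ _ _ (sq_lt_sq.1 (by nlinarith))

lemma sub_apply_mul_sub_apply_pos (hφ : ∀ x y, |x| < |y| → φ y < φ x)
    (hk : ∀ x y, |x| < |y| → k y < k x) {c d s : ℝ} (hcd : 0 < c * d) (hs : s ≠ 0) :
    0 < (φ (s - d) - φ (s + d)) * (k (c - s) - k (c + s)) := by
  have hprod : 0 < c * s * (s * d) := by
    rw [show c * s * (s * d) = s ^ 2 * (c * d) by ring]
    exact mul_pos (sq_pos_of_ne_zero hs) hcd
  rcases mul_pos_iff.1 hprod with ⟨hcs, hsd⟩ | ⟨hcs, hsd⟩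
  · exact mul_pos (sub_pos.2 (apply_add_lt_apply_sub_of_mul_pos hφ hsd))
      (sub_pos.2 (apply_add_lt_apply_sub_of_mul_pos hk hcs))
  · have hφ' := apply_add_lt_apply_sub_of_mul_pos hφ (s := s) (d := -d) (by linarith)
    have hk' := apply_add_lt_apply_sub_of_mul_pos hk (s := c) (d := -s) (by linarith)
    simp only [sub_neg_eq_add, ← sub_eq_add_neg] at hφ' hk'
    exact mul_pos_of_neg_of_neg (by linarith) (by linarith)

theorem integral_comp_sub_mul_lt_of_abs_lt (hφi : Integrable φ) (hφ_even : ∀ x, φ (-x) = φ x)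
    (hφ : ∀ x y, |x| < |y| → φ y < φ x) (hki : MemLp k ∞)
    (hk : ∀ x y, |x| < |y| → k y < k x) {m m' : ℝ} (hm : |m| < |m'|) :
    ∫ u, φ (u - m') * k u < ∫ u, φ (u - m) * k u := by
  obtain ⟨c, d, rfl, rfl⟩ : ∃ c d, m = c - d ∧ m' = c + d :=
    ⟨(m + m') / 2, (m' - m) / 2, by ring, by ring⟩
  have hcd : 0 < c * d := by nlinarith [sq_lt_sq.2 hm]
  have hint (a : ℝ) : Integrable fun u => φ (u - a) * k u :=
    (hφi.comp_sub_right a).mul_of_top_left hki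
  obtain ⟨D, hD_def⟩ : ∃ D : ℝ → ℝ, D = fun u => (φ (u - (c - d)) - φ (u - (c + d))) * k u :=
    ⟨_, rfl⟩
  have hD : Integrable D := by rw [hD_def]; simp only [sub_mul]; exact (hint _).sub (hint _)
  have hsymm (s : ℝ) :
      D (c + s) + D (c - s) = (φ (s - d) - φ (s + d)) * (k (c - s) - k (c + s)) := by
    simp only [hD_def]
    rw [show c + s - (c - d) = s + d by ring, show c + s - (c + d) = s - d by ring,
      show c - s - (c - d) = -(s - d) by ring, show c - s - (c + d) = -(s + d) by ring,
      hφ_even, hφ_even]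
    ring
  have hfold : 2 * ∫ u, D u = ∫ s, (φ (s - d) - φ (s + d)) * (k (c - s) - k (c + s)) := by
    simp only [← hsymm]
    rw [integral_add (hD.comp_add_left c) (hD.comp_sub_left c), integral_add_left_eq_self,
      integral_sub_left_eq_self]
    ring
  have hpos : 0 < ∫ s, (φ (s - d) - φ (s + d)) * (k (c - s) - k (c + s)) := by
    have hG : Integrable fun s => (φ (s - d) - φ (s + d)) * (k (c - s) - k (c + s)) := by
      simp only [← hsymm]
      exact (hD.comp_add_left c).add (hD.comp_sub_left c)
    refine (integral_pos_iff_support_of_nonneg (fun s => ?_) hG).2 ?_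
    · rcases eq_or_ne s 0 with rfl | hs
      · simp
      · exact (sub_apply_mul_sub_apply_pos hφ hk hcd hs).le
    · refine lt_of_lt_of_le ?_ (measure_mono (s := Ioi 0) fun s hs =>
        (sub_apply_mul_sub_apply_pos hφ hk hcd (ne_of_gt hs)).ne')
      simp [Real.volume_Ioi]
  have hdiff : ∫ u, D u = (∫ u, φ (u - (c - d)) * k u) - ∫ u, φ (u - (c + d)) * k u := by
    simp only [hD_def, sub_mul]
    exact integral_sub (hint _) (hint _)
  linarith

end SymmetricDecreasing

section TailIntegral

variable {g : ℝ → ℝ}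

lemma strictAnti_setIntegral_Ici (hg : Integrable g) (hpos : ∀ x, 0 < g x) :
    StrictAnti fun t => ∫ x in Ici t, g x := by
  intro s t hst
  have hdiff := intervalIntegral.integral_Ici_sub_Ici' (a := s) (b := t) hg.integrableOn
    hg.integrableOn
  have := intervalIntegral.intervalIntegral_pos_of_pos hg.intervalIntegrable hpos hst
  linarith

lemma memLp_top_setIntegral_Ici_comp (hg : Integrable g) (hpos : ∀ x, 0 < g x) {a : ℝ → ℝ}
    (ha : Measurable a) : MemLp (fun u => ∫ x in Ici (a u), g x) ∞ := by
  refine memLp_top_of_bound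
    ((strictAnti_setIntegral_Ici hg hpos).antitone.measurable.comp ha).aestronglyMeasurable
    (∫ x, g x) (ae_of_all _ fun u => ?_)
  rw [Real.norm_eq_abs,
    abs_of_nonneg (setIntegral_nonneg measurableSet_Ici fun x _ => (hpos x).le)]
  exact setIntegral_le_integral hg (ae_of_all _ fun x => (hpos x).le)

end TailIntegral

lemma setIntegral_le_fst_mul {f g a : ℝ → ℝ} (hf : Integrable f) (hg : Integrable g)
    (ha : Measurable a) :
    ∫ p : ℝ × ℝ in {p | a p.2 ≤ p.1}, f p.1 * g p.2 = ∫ y, g y * ∫ x in Ici (a y), f x := by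
  have hS : MeasurableSet {p : ℝ × ℝ | a p.2 ≤ p.1} :=
    measurableSet_le (ha.comp measurable_snd) measurable_fst
  have hfg : Integrable (fun p : ℝ × ℝ => f p.1 * g p.2) (volume.prod volume) := hf.mul_prod hg
  rw [← integral_indicator hS, Measure.volume_eq_prod, integral_prod_symm _ (hfg.indicator hS)]
  congr 1; ext y
  rw [mul_comm, ← integral_mul_const, ← integral_indicator measurableSet_Ici]
  rfl

lemma exp_mul_sub_sq_div_two (a x : ℝ) :
    Real.exp (a * x - x ^ 2 / 2) = Real.exp (a ^ 2 / 2) * Real.exp (-(x - a) ^ 2 / 2) := by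
  rw [← Real.exp_add]; ring_nf

lemma integrable_exp_neg_sq_div_two : Integrable fun x : ℝ => Real.exp (-x ^ 2 / 2) := by
  simpa [neg_div, div_eq_inv_mul] using integrable_exp_neg_mul_sq (by norm_num : (0 : ℝ) < 1 / 2)

lemma integrable_exp_mul_sub_sq_div_two (a : ℝ) :
    Integrable fun x : ℝ => Real.exp (a * x - x ^ 2 / 2) := by
  simp only [exp_mul_sub_sq_div_two a]
  exact (integrable_exp_neg_sq_div_two.comp_sub_right a).const_mul _

lemma Ptilt_eq (θ₁ θ₂ b₁ b₂ b₃ : ℝ) :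
    Ptilt θ₁ θ₂ b₁ b₂ b₃ = 1 / (2 * Real.pi) * Real.exp (θ₂ ^ 2 / 2) *
      ∫ u, Real.exp (-(u - (b₁ + θ₂)) ^ 2 / 2) *
        ∫ x in Ici (b₂ * |u| - b₃), Real.exp (θ₁ * x - x ^ 2 / 2) := by
  have hS : {p : ℝ × ℝ | b₂ * |p.2 + b₁| ≤ p.1 + b₃} = {p | b₂ * |p.2 + b₁| - b₃ ≤ p.1} := by
    ext; simp
  have hexp (p : ℝ × ℝ) : Real.exp (θ₁ * p.1 + θ₂ * p.2 - (p.1 ^ 2 + p.2 ^ 2) / 2) =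
      Real.exp (θ₁ * p.1 - p.1 ^ 2 / 2) * Real.exp (θ₂ * p.2 - p.2 ^ 2 / 2) := by
    rw [← Real.exp_add]; ring_nf
  rw [Ptilt, hS]
  simp only [hexp]
  rw [setIntegral_le_fst_mul (a := fun y => b₂ * |y + b₁| - b₃)
    (integrable_exp_mul_sub_sq_div_two θ₁) (integrable_exp_mul_sub_sq_div_two θ₂) (by fun_prop)]
  conv_rhs => rw [mul_assoc, ← integral_const_mul, ← integral_add_right_eq_self _ b₁]
  congr 2 with y
  rw [add_comm b₁ θ₂, exp_mul_sub_sq_div_two, add_sub_add_right_eq_sub, mul_assoc]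

lemma Ptilt_lt_Ptilt_of_abs_lt (θ₁ θ₂ b₃ : ℝ) {b₂ b b' : ℝ} (hb₂ : 0 < b₂)
    (h : |b + θ₂| < |b' + θ₂|) : Ptilt θ₁ θ₂ b' b₂ b₃ < Ptilt θ₁ θ₂ b b₂ b₃ := by
  have hφ (x y : ℝ) (hxy : |x| < |y|) : Real.exp (-y ^ 2 / 2) < Real.exp (-x ^ 2 / 2) := by
    have := sq_lt_sq.2 hxy
    gcongr
  have hk (x y : ℝ) (hxy : |x| < |y|) :
      ∫ t in Ici (b₂ * |y| - b₃), Real.exp (θ₁ * t - t ^ 2 / 2) <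
        ∫ t in Ici (b₂ * |x| - b₃), Real.exp (θ₁ * t - t ^ 2 / 2) :=
    strictAnti_setIntegral_Ici (integrable_exp_mul_sub_sq_div_two θ₁) (fun _ => Real.exp_pos _)
      (by gcongr)
  rw [Ptilt_eq, Ptilt_eq]
  refine mul_lt_mul_of_pos_left (integral_comp_sub_mul_lt_of_abs_lt integrable_exp_neg_sq_div_two
    (fun x => by rw [neg_sq]) hφ (memLp_top_setIntegral_Ici_comp
      (integrable_exp_mul_sub_sq_div_two θ₁) (fun _ => Real.exp_pos _) (by fun_prop)) hk h)
    (by positivity)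

theorem stmt13 (θ₁ θ₂ b₃ b₂ : ℝ) (hb₂ : 0 < b₂) :
    (∀ b₁ : ℝ, Ptilt θ₁ θ₂ b₁ b₂ b₃ ≤ Ptilt θ₁ θ₂ (-θ₂) b₂ b₃) ∧
    StrictMonoOn (fun b₁ => Ptilt θ₁ θ₂ b₁ b₂ b₃) (Set.Iic (-θ₂)) ∧
    StrictAntiOn (fun b₁ => Ptilt θ₁ θ₂ b₁ b₂ b₃) (Set.Ici (-θ₂)) ∧
    (∀ b₁ : ℝ, b₁ ≠ -θ₂ → Ptilt θ₁ θ₂ b₁ b₂ b₃ < Ptilt θ₁ θ₂ (-θ₂) b₂ b₃) := by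
  have hlt {b b' : ℝ} := Ptilt_lt_Ptilt_of_abs_lt θ₁ θ₂ b₃ (b := b) (b' := b') hb₂
  have hmax (b₁ : ℝ) (hb₁ : b₁ ≠ -θ₂) : Ptilt θ₁ θ₂ b₁ b₂ b₃ < Ptilt θ₁ θ₂ (-θ₂) b₂ b₃ :=
    hlt (by rw [neg_add_cancel, abs_zero, abs_pos, ← sub_neg_eq_add]; exact sub_ne_zero.2 hb₁)
  refine ⟨fun b₁ => ?_, fun x hx y hy hxy => hlt ?_, fun x hx y hy hxy => hlt ?_, hmax⟩
  · rcases eq_or_ne b₁ (-θ₂) with rfl | hb₁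
    exacts [le_rfl, (hmax b₁ hb₁).le]
  · rw [mem_Iic] at hx hy
    rw [abs_of_nonpos (by linarith), abs_of_nonpos (by linarith)]
    linarith
  · rw [mem_Ici] at hx hy
    rw [abs_of_nonneg (by linarith), abs_of_nonneg (by linarith)]
    linarith
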